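/- arXiv:2412.05306 — 5 statements merged into one kernel-verified Lean document; each statement's English description precedes it below -/
import Mathlib

section
/- Let P_F ∈ (0,1), m ≥ 1, and define ρ(z) = z^ε (1 - (1-P_F)^{1/(m z)}) for z ≥ 2, where ε ≥ 1. Then ρ is monotonically increasing on [2, ∞). -/
open Real Set

/-- For `P_F ∈ (0,1)`, `m ≥ 1`, `ε ≥ 1`, the function
`ρ(z) = z^ε (1 - (1-P_F)^{1/(m z)})` is monotonically increasing on `[2, ∞)`. -/
theorem rho_strictMonoOn (PF : ℝ) (hPF0 : 0 < PF) (hPF1 : PF < 1)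
    (m : ℕ) (hm : 1 ≤ m) (ε : ℝ) (hε : 1 ≤ ε) :
    StrictMonoOn (fun z : ℝ => z ^ ε * (1 - (1 - PF) ^ (1 / (m * z)))) (Ici 2) := by
  have hm0 : (0:ℝ) < (m:ℝ) := by exact_mod_cast hm.trans_lt' (by norm_num)
  set a := 1 - PF with ha
  have ha0 : 0 < a := by simp [ha]; linarith
  have ha1 : a < 1 := by simp [ha]; linarith
  have hL : Real.log a < 0 := Real.log_neg ha0 ha1
  have hderiv : ∀ z : ℝ, 0 < z →
      HasDerivAt (fun z : ℝ => z ^ ε * (1 - a ^ (1 / ((m:ℝ) * z))))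
        (ε * z ^ (ε - 1) * (1 - a ^ (1 / ((m:ℝ) * z))) +
          z ^ ε * (-((a ^ (1 / ((m:ℝ) * z)) * Real.log a) *
            ((0 * ((m:ℝ) * z) - 1 * (m:ℝ)) / ((m:ℝ) * z) ^ 2)))) z := by
    intro z hz
    have hmz : (m:ℝ) * z ≠ 0 := by positivity
    have hu : HasDerivAt (fun z : ℝ => 1 / ((m:ℝ) * z))
        ((0 * ((m:ℝ) * z) - 1 * (m:ℝ)) / ((m:ℝ) * z) ^ 2) z :=
      (hasDerivAt_const z (1:ℝ)).div (((hasDerivAt_id z).const_mul (m:ℝ)).congr_deriv (by ring)) hmz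
    have hg : HasDerivAt (fun z : ℝ => a ^ (1 / ((m:ℝ) * z)))
        ((a ^ (1 / ((m:ℝ) * z)) * Real.log a) *
          ((0 * ((m:ℝ) * z) - 1 * (m:ℝ)) / ((m:ℝ) * z) ^ 2)) z :=
      ((Real.hasStrictDerivAt_const_rpow ha0 _).hasDerivAt).comp z hu
    exact (Real.hasDerivAt_rpow_const (Or.inr hε)).mul (hg.const_sub 1)
  apply strictMonoOn_of_deriv_pos (convex_Ici 2)
  · intro z hz
    have hz0 : (0:ℝ) < z := lt_of_lt_of_le (by norm_num) (mem_Ici.mp hz)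
    exact (hderiv z hz0).continuousAt.continuousWithinAt
  · intro z hz
    rw [interior_Ici] at hz
    have hz0 : (0:ℝ) < z := lt_trans (by norm_num) (mem_Ioi.mp hz)
    rw [(hderiv z hz0).deriv]
    have hmz : (0:ℝ) < (m:ℝ) * z := by positivity
    set A := a ^ (1 / ((m:ℝ) * z)) with hA
    have hA0 : 0 < A := Real.rpow_pos_of_pos ha0 _
    have hA1 : A < 1 := Real.rpow_lt_one ha0.le ha1 (by positivity)
    set s := Real.log a * (1 / ((m:ℝ) * z)) with hs
    have hs0 : s < 0 := mul_neg_of_neg_of_pos hL (by positivity)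
    have hAe : A = Real.exp s := by
      rw [hA, hs, Real.rpow_def_of_pos ha0]
    have hkey : 0 < 1 - A + s * A := by
      have h1 : -s + 1 < Real.exp (-s) := Real.add_one_lt_exp (show -s ≠ 0 by intro h; linarith [neg_eq_zero.mp h])
      have he : Real.exp (-s) * Real.exp s = 1 := by rw [← Real.exp_add]; simp
      rw [hAe]
      nlinarith [Real.exp_pos s, Real.exp_pos (-s)]
    have hB : 0 < z ^ (ε - 1) := Real.rpow_pos_of_pos hz0 _
    have hze : z ^ ε = z ^ (ε - 1) * z := by
      rw [← Real.rpow_add_one hz0.ne' (ε - 1), sub_add_cancel]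
    rw [hze]
    have heq : ε * z ^ (ε - 1) * (1 - A) +
        z ^ (ε - 1) * z * (-((A * Real.log a) * ((0 * ((m:ℝ) * z) - 1 * (m:ℝ)) / ((m:ℝ) * z) ^ 2)))
        = z ^ (ε - 1) * (ε * (1 - A) + s * A) := by
      rw [hs]
      field_simp
      ring
    rw [heq]
    apply mul_pos hB
    nlinarith [mul_nonneg (sub_nonneg.mpr hε) (sub_pos.mpr hA1).le]
end

section
/- Fix ω ≥ 0, β ≥ 0 an integer, and for each positive integer m let F_m(t) = exp(-ω/(1+t)) (t/(1+t))^{m(β+m)} for t > 0. Then for any fixed x > 0, as m, p → ∞ with m/p → c₁ ∈ (0,1] and ω/p → τ ≥ 0 (with β = p - m), F_m(m² x) → exp(-1/(c₁ x)). -/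
open Real Filter

/-- With `F_m(t) = exp(-ω/(1+t)) (t/(1+t))^{m(β+m)}`, `β = p - m`, as `m, p → ∞` with
`m/p → c₁ ∈ (0,1]` and `ω/p → τ ≥ 0`, one has `F_m(m² x) → exp(-1/(c₁ x))` for fixed `x > 0`. -/
theorem cdf_scaled_limit_omega_linear
    (c₁ : ℝ) (hc₁0 : 0 < c₁) (hc₁1 : c₁ ≤ 1) (τ : ℝ) (hτ : 0 ≤ τ)
    (m p : ℕ → ℕ) (ω : ℕ → ℝ) (hω0 : ∀ k, 0 ≤ ω k) (hmp : ∀ k, m k ≤ p k)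
    (hm : Tendsto m atTop atTop) (hp : Tendsto p atTop atTop)
    (hratio : Tendsto (fun k => (m k : ℝ) / (p k : ℝ)) atTop (nhds c₁))
    (hωp : Tendsto (fun k => ω k / (p k : ℝ)) atTop (nhds τ))
    (x : ℝ) (hx : 0 < x) :
    Tendsto (fun k =>
        Real.exp (-(ω k) / (1 + (m k : ℝ) ^ 2 * x)) *
          ((m k : ℝ) ^ 2 * x / (1 + (m k : ℝ) ^ 2 * x)) ^ (m k * ((p k - m k) + m k)))
      atTop (nhds (Real.exp (-1 / (c₁ * x)))) := by
  set t : ℕ → ℝ := fun k => (m k : ℝ) ^ 2 * x with ht_def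
  have hmR : Tendsto (fun k => (m k : ℝ)) atTop atTop :=
    tendsto_natCast_atTop_atTop.comp hm
  have ht : Tendsto t atTop atTop :=
    ((tendsto_pow_atTop two_ne_zero).comp hmR).atTop_mul_const hx
  have hm1 : ∀ᶠ k in atTop, 1 ≤ m k := hm.eventually_ge_atTop 1
  have hp1 : ∀ᶠ k in atTop, 1 ≤ p k := hp.eventually_ge_atTop 1
  -- p/m → 1/c₁
  have hpm : Tendsto (fun k => (p k : ℝ) / (m k : ℝ)) atTop (nhds (1 / c₁)) := by
    have := hratio.inv₀ (ne_of_gt hc₁0)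
    simpa [one_div, inv_div] using this
  -- m*x → ∞
  have hmx : Tendsto (fun k => (m k : ℝ) * x) atTop atTop := hmR.atTop_mul_const hx
  -- p / t → 0
  have hpt : Tendsto (fun k => (p k : ℝ) / t k) atTop (nhds 0) := by
    have h := hpm.div_atTop hmx
    refine h.congr fun k => ?_
    rw [div_div]
    congr 1
    simp [ht_def]; ring
  -- ω/(1+t) → 0
  have hC0 : Tendsto (fun k => ω k / (1 + t k)) atTop (nhds 0) := by
    have hg : Tendsto (fun k => (ω k / (p k : ℝ)) * ((p k : ℝ) / t k)) atTop (nhds 0) := by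
      simpa using hωp.mul hpt
    refine squeeze_zero' ?_ ?_ hg
    · filter_upwards with k
      have htk : (0:ℝ) ≤ t k := by positivity
      exact div_nonneg (hω0 k) (by linarith)
    · filter_upwards [hm1, hp1] with k hm1 hp1
      have hmk : (0:ℝ) < (m k : ℝ) := by exact_mod_cast hm1
      have hpk : (0:ℝ) < (p k : ℝ) := by exact_mod_cast hp1
      have htk : (0:ℝ) < t k := by positivity
      have h1 : (ω k / (p k : ℝ)) * ((p k : ℝ) / t k) = ω k / t k := by
        field_simp
      rw [h1]
      exact div_le_div_of_nonneg_left (hω0 k) htk (by linarith)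
  -- t * log(1 + 1/t) → 1
  have hB : Tendsto (fun k => t k * Real.log (1 + 1 / t k)) atTop (nhds 1) :=
    (Real.tendsto_mul_log_one_add_div_atTop 1).comp ht
  -- (p/m)/x → (1/c₁)/x
  have hA : Tendsto (fun k => (p k : ℝ) / (m k : ℝ) / x) atTop (nhds (1 / c₁ / x)) :=
    hpm.div_const x
  -- the log of the whole expression tends to -1/(c₁ x)
  have hlog : Tendsto
      (fun k => -(ω k) / (1 + t k) + (m k * p k : ℕ) * Real.log (t k / (1 + t k)))
      atTop (nhds (-1 / (c₁ * x))) := by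
    have hcomb : Tendsto
        (fun k => -(ω k / (1 + t k)) + -((p k : ℝ) / (m k : ℝ) / x *
          (t k * Real.log (1 + 1 / t k)))) atTop (nhds (-0 + -(1 / c₁ / x * 1))) :=
      (hC0.neg).add ((hA.mul hB).neg)
    have he : (-0 + -(1 / c₁ / x * 1) : ℝ) = -1 / (c₁ * x) := by
      field_simp
      ring
    rw [he] at hcomb
    refine hcomb.congr' ?_
    filter_upwards [hm1] with k hm1
    have hmk : (0:ℝ) < (m k : ℝ) := by exact_mod_cast hm1
    have htk : (0:ℝ) < t k := by positivity
    have hlogeq : Real.log (t k / (1 + t k)) = -Real.log (1 + 1 / t k) := by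
      rw [← Real.log_inv]
      congr 1
      field_simp
      ring
    have hcoef : ((m k * p k : ℕ) : ℝ) / t k = (p k : ℝ) / (m k : ℝ) / x := by
      push_cast
      field_simp [ht_def]
      ring
    have : ((m k * p k : ℕ) : ℝ) * Real.log (t k / (1 + t k))
        = -((p k : ℝ) / (m k : ℝ) / x * (t k * Real.log (1 + 1 / t k))) := by
      rw [hlogeq, ← hcoef]
      field_simp
    rw [neg_div, this]
  -- exponentiate
  have hfinal := (Real.continuous_exp.tendsto _).comp hlog
  refine hfinal.congr' ?_
  filter_upwards [hm1] with k hm1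
  have hmk : (0:ℝ) < (m k : ℝ) := by exact_mod_cast hm1
  have htk : (0:ℝ) < t k := by positivity
  have hb : (0:ℝ) < t k / (1 + t k) := by positivity
  have hexp : m k * ((p k - m k) + m k) = m k * p k := by
    rw [Nat.sub_add_cancel (hmp k)]
  simp only [Function.comp_def, Real.exp_add, hexp]
  congr 1
  rw [Real.exp_nat_mul, Real.exp_log hb]
end

section
/- Fix β = p - m and for each m let F_m(t) = exp(-ω/(1+t)) (t/(1+t))^{m(β+m)}. If m, p → ∞ with m/p → c₁ ∈ (0,1] and ω/p² → φ ≥ 0, then for any fixed x > 0, F_m(m² x) → exp(-(φ + c₁)/(c₁² x)). -/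
open Real Filter

/-- With `F_m(t) = exp(-ω/(1+t)) (t/(1+t))^{m(β+m)}`, `β = p - m`, as `m, p → ∞` with
`m/p → c₁ ∈ (0,1]` and `ω/p² → φ ≥ 0`, one has `F_m(m² x) → exp(-(φ+c₁)/(c₁² x))`
for fixed `x > 0`. -/
theorem cdf_scaled_limit_omega_quadratic
    (c₁ : ℝ) (hc₁0 : 0 < c₁) (hc₁1 : c₁ ≤ 1) (φ : ℝ) (hφ : 0 ≤ φ)
    (m p : ℕ → ℕ) (ω : ℕ → ℝ) (hω0 : ∀ k, 0 ≤ ω k) (hmp : ∀ k, m k ≤ p k)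
    (hm : Tendsto m atTop atTop) (hp : Tendsto p atTop atTop)
    (hratio : Tendsto (fun k => (m k : ℝ) / (p k : ℝ)) atTop (nhds c₁))
    (hωp : Tendsto (fun k => ω k / (p k : ℝ) ^ 2) atTop (nhds φ))
    (x : ℝ) (hx : 0 < x) :
    Tendsto (fun k =>
        Real.exp (-(ω k) / (1 + (m k : ℝ) ^ 2 * x)) *
          ((m k : ℝ) ^ 2 * x / (1 + (m k : ℝ) ^ 2 * x)) ^ (m k * ((p k - m k) + m k)))
      atTop (nhds (Real.exp (-(φ + c₁) / (c₁ ^ 2 * x)))) := by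
  have hxne : x ≠ 0 := hx.ne'
  have hc₁ne : c₁ ≠ 0 := hc₁0.ne'
  set u : ℕ → ℝ := fun k => (1 + (m k : ℝ) ^ 2 * x)⁻¹ with hu_def
  have hmR : Tendsto (fun k => (m k : ℝ)) atTop atTop :=
    tendsto_natCast_atTop_atTop.comp hm
  have hm2 : Tendsto (fun k => (m k : ℝ) ^ 2) atTop atTop :=
    (tendsto_pow_atTop two_ne_zero).comp hmR
  have hden : Tendsto (fun k => 1 + (m k : ℝ) ^ 2 * x) atTop atTop :=
    tendsto_atTop_add_const_left _ 1 (hm2.atTop_mul_const hx)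
  have hdenpos : ∀ k, 0 < 1 + (m k : ℝ) ^ 2 * x := fun k => by positivity
  have hupos : ∀ k, 0 < u k := fun k => inv_pos.mpr (hdenpos k)
  have hm1 : ∀ᶠ k in atTop, 1 ≤ m k := hm.eventually_ge_atTop 1
  -- p/m → c₁⁻¹
  have hpm : Tendsto (fun k => (p k : ℝ) / (m k : ℝ)) atTop (nhds c₁⁻¹) := by
    simpa [inv_div] using hratio.inv₀ hc₁ne
  -- m²/(1+m²x) → 1/x
  have hA : Tendsto (fun k => (m k : ℝ) ^ 2 / (1 + (m k : ℝ) ^ 2 * x)) atTop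
      (nhds (1 / x)) := by
    have h0 : Tendsto (fun k => ((m k : ℝ) ^ 2)⁻¹) atTop (nhds 0) :=
      tendsto_inv_atTop_zero.comp hm2
    have h1 : Tendsto (fun k => 1 / (((m k : ℝ) ^ 2)⁻¹ + x)) atTop (nhds (1 / (0 + x))) :=
      tendsto_const_nhds.div (h0.add tendsto_const_nhds) (by simpa using hxne)
    rw [show (1:ℝ)/x = 1/(0+x) by norm_num]
    refine Tendsto.congr' ?_ h1
    filter_upwards [hm1] with k hk
    have hmne : (m k : ℝ) ≠ 0 := by positivity
    field_simp
  -- p²/(1+m²x) → 1/(c₁² x)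
  have hB : Tendsto (fun k => (p k : ℝ) ^ 2 / (1 + (m k : ℝ) ^ 2 * x)) atTop
      (nhds (c₁⁻¹ ^ 2 * (1 / x))) := by
    refine Tendsto.congr' ?_ ((hpm.pow 2).mul hA)
    filter_upwards [hm1] with k hk
    have hmne : (m k : ℝ) ≠ 0 := by positivity
    field_simp
  -- term1
  have hterm1 : Tendsto (fun k => -(ω k) / (1 + (m k : ℝ) ^ 2 * x)) atTop
      (nhds (-(φ * (c₁⁻¹ ^ 2 * (1 / x))))) := by
    have hp1 : ∀ᶠ k in atTop, 1 ≤ p k := hp.eventually_ge_atTop 1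
    refine Tendsto.congr' ?_ ((hωp.mul hB).neg)
    filter_upwards [hp1] with k hk
    have hpne : (p k : ℝ) ≠ 0 := by positivity
    field_simp
  -- u → 0 within {0}ᶜ
  have hu : Tendsto u atTop (nhds 0) := hden.inv_tendsto_atTop
  have hu' : Tendsto u atTop (nhdsWithin 0 {0}ᶜ) :=
    tendsto_nhdsWithin_of_tendsto_nhds_of_eventually_within _ hu
      (Eventually.of_forall fun k => (hupos k).ne')
  -- log slope
  have hlog : Tendsto (fun y : ℝ => Real.log (1 - y) / y) (nhdsWithin 0 {0}ᶜ)
      (nhds (-1)) := by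
    have h1 : HasDerivAt (fun y : ℝ => 1 - y) (-1) 0 := by
      simpa using (hasDerivAt_id (0:ℝ)).const_sub 1
    have hd : HasDerivAt (fun y : ℝ => Real.log (1 - y)) (-1) 0 := by
      simpa using h1.log (by norm_num)
    have hslope := hasDerivAt_iff_tendsto_slope.mp hd
    simpa [slope_fun_def, Real.log_one, div_eq_inv_mul] using hslope
  have hcomp : Tendsto (fun k => Real.log (1 - u k) / u k) atTop (nhds (-1)) :=
    hlog.comp hu'
  -- m p u → c₁⁻¹ * (1/x)
  have hmpu : Tendsto (fun k => (m k : ℝ) * (p k : ℝ) * u k) atTop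
      (nhds (c₁⁻¹ * (1 / x))) := by
    refine Tendsto.congr' ?_ (hpm.mul hA)
    filter_upwards [hm1] with k hk
    have hmne : (m k : ℝ) ≠ 0 := by positivity
    have hdne : (1 + (m k : ℝ) ^ 2 * x) ≠ 0 := (hdenpos k).ne'
    simp only [hu_def]
    field_simp
  -- combined exponent limit
  have hmain : Tendsto (fun k => -(ω k) / (1 + (m k : ℝ) ^ 2 * x)
      + ((m k : ℝ) * (p k : ℝ) * u k) * (Real.log (1 - u k) / u k)) atTop
      (nhds (-(φ * (c₁⁻¹ ^ 2 * (1 / x))) + (c₁⁻¹ * (1 / x)) * (-1))) :=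
    hterm1.add (hmpu.mul hcomp)
  have hexp := (Real.continuous_exp.tendsto _).comp hmain
  have hval : Real.exp (-(φ * (c₁⁻¹ ^ 2 * (1 / x))) + (c₁⁻¹ * (1 / x)) * (-1))
      = Real.exp (-(φ + c₁) / (c₁ ^ 2 * x)) := by
    congr 1
    field_simp
    ring
  rw [← hval]
  refine Tendsto.congr' ?_ hexp
  filter_upwards [hm1] with k hk
  have hmne : (m k : ℝ) ≠ 0 := by positivity
  have hdne : (1 + (m k : ℝ) ^ 2 * x) ≠ 0 := (hdenpos k).ne'
  have hune : u k ≠ 0 := (hupos k).ne'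
  have h1u : 1 - u k = (m k : ℝ) ^ 2 * x / (1 + (m k : ℝ) ^ 2 * x) := by
    simp only [hu_def]
    field_simp
    ring
  have hapos : 0 < (m k : ℝ) ^ 2 * x / (1 + (m k : ℝ) ^ 2 * x) := by positivity
  have hexpsub : m k * ((p k - m k) + m k) = m k * p k := by
    rw [Nat.sub_add_cancel (hmp k)]
  simp only [Function.comp_apply, h1u, hexpsub]
  rw [Real.exp_add]
  congr 1
  have heq : (m k : ℝ) * (p k : ℝ) * u k *
      (Real.log ((m k : ℝ) ^ 2 * x / (1 + (m k : ℝ) ^ 2 * x)) / u k)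
      = ((m k * p k : ℕ) : ℝ) * Real.log ((m k : ℝ) ^ 2 * x / (1 + (m k : ℝ) ^ 2 * x)) := by
    push_cast
    field_simp
  rw [heq, Real.exp_nat_mul, Real.exp_log hapos]
end

section
/- For positive integers n, p with n ≥ 1, nonnegative integers i, α with i ≤ α+1, and real w, the finite sum Σ_{k=0}^{α+1-i} (-α+i-1)_k (-n-p-i+2)_k w^{n-k-1}/k! equals e^{-w} (β! )^{-1} (p+α)! · 𝒜, where 𝒜 = β! Σ_{k=0}^{m+i-2} [(-m-i+2)_k (p+i-1)_k / (k! (β+k+1)!)] · ₁F₁(p+α+1; β+k+2; w), with m = n - α and β = p - m, assuming max_i(m+i-2) ≤ n-1 and α - i + 1 < n - 1. -/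
open Finset

/-- Pochhammer symbol `(a)_k` for real `a`. -/
noncomputable def pochR (a : ℝ) (k : ℕ) : ℝ := ∏ i ∈ Finset.range k, (a + i)

/-- Confluent hypergeometric function of the first kind
`₁F₁(a;b;x) = ∑_{j≥0} (a)_j x^j / ((b)_j j!)`. -/
noncomputable def F11 (a b x : ℝ) : ℝ :=
  ∑' j : ℕ, pochR a j * x ^ j / (pochR b j * j.factorial)

lemma pochR_zero (a : ℝ) : pochR a 0 = 1 := by simp [pochR]

lemma pochR_succ (a : ℝ) (k : ℕ) : pochR a (k + 1) = pochR a k * (a + k) := by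
  simp [pochR, Finset.prod_range_succ]

lemma pochR_succ_left (a : ℝ) (k : ℕ) : pochR a (k + 1) = a * pochR (a + 1) k := by
  rw [pochR, Finset.prod_range_succ']
  simp only [Nat.cast_zero, add_zero]
  rw [mul_comm, pochR]
  congr 1
  apply Finset.prod_congr rfl
  intro i _
  push_cast
  ring

lemma pochR_add (a : ℝ) (j l : ℕ) : pochR a (j + l) = pochR a j * pochR (a + j) l := by
  rw [pochR, Finset.prod_range_add]
  congr 1
  apply Finset.prod_congr rfl
  intro i _
  push_cast
  ring

lemma pochR_pos {a : ℝ} (ha : 0 < a) (k : ℕ) : 0 < pochR a k := by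
  apply Finset.prod_pos
  intro i _
  positivity

lemma pochR_nonneg {a : ℝ} (ha : 0 ≤ a) (k : ℕ) : 0 ≤ pochR a k := by
  apply Finset.prod_nonneg
  intro i _
  positivity

/-- `(-N)_k = 0` when `k > N`. -/
lemma pochR_neg_nat_eq_zero (N k : ℕ) (h : N < k) : pochR (-(N : ℝ)) k = 0 := by
  apply Finset.prod_eq_zero (i := N)
  · exact Finset.mem_range.2 h
  · simp

/-- `(q+1)_r = (q+r)!/q!`, i.e. `(q+1)_r * q! = (q+r)!`. -/
lemma pochR_nat_factorial (q r : ℕ) :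
    pochR ((q : ℝ) + 1) r * (Nat.factorial q : ℝ) = (Nat.factorial (q + r) : ℝ) := by
  induction r with
  | zero => simp [pochR_zero]
  | succ r ih =>
      rw [pochR_succ, show q + (r+1) = (q+r)+1 by ring, Nat.factorial_succ]
      push_cast
      nlinarith [ih]

/-- `(-q)_r = (-1)^r * q!/(q-r)!` for `r ≤ q`, in product form. -/
lemma pochR_neg_nat (q r : ℕ) (h : r ≤ q) :
    pochR (-(q : ℝ)) r * (Nat.factorial (q - r) : ℝ) = (-1) ^ r * (Nat.factorial q : ℝ) := by
  induction r with
  | zero => simp [pochR_zero]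
  | succ r ih =>
      have hr : r ≤ q := Nat.le_of_succ_le h
      have h1 : q - r = (q - (r+1)) + 1 := by omega
      rw [pochR_succ]
      have ih' := ih hr
      rw [h1, Nat.factorial_succ] at ih'
      have hd : ((q - (r+1) : ℕ) : ℝ) = (q : ℝ) - r - 1 := by
        push_cast [Nat.cast_sub (show r + 1 ≤ q from h)]
        ring
      push_cast at ih'
      rw [hd] at ih'
      push_cast
      linear_combination (-1 : ℝ) * ih'

/-- Chu–Vandermonde in alternating Pochhammer form:
`∑_j C(N,j) (-1)^j (x)_j (y+j)_{N-j} = (y-x)_N`. -/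
lemma vdm2 (x : ℝ) : ∀ (N : ℕ) (y : ℝ),
    ∑ j ∈ range (N + 1),
        (N.choose j : ℝ) * (-1) ^ j * pochR x j * pochR (y + j) (N - j)
      = pochR (y - x) N := by
  intro N
  induction N with
  | zero => intro y; simp [pochR_zero]
  | succ N ih =>
    intro y
    set A : ℕ → ℝ := fun j =>
      (N.choose j : ℝ) * (-1) ^ j * pochR x j * pochR (y + j) (N + 1 - j) with hA
    set B : ℕ → ℝ := fun j =>
      (N.choose j : ℝ) * (-1) ^ (j + 1) * pochR x (j + 1) * pochR (y + (j + 1)) (N - j) with hB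
    have claim1 :
        ∑ j ∈ range (N + 2),
            ((N + 1).choose j : ℝ) * (-1) ^ j * pochR x j * pochR (y + j) (N + 1 - j)
          = ∑ j ∈ range (N + 2), A j + ∑ j ∈ range (N + 1), B j := by
      rw [Finset.sum_range_succ' (fun j => ((N + 1).choose j : ℝ) * (-1) ^ j * pochR x j *
            pochR (y + j) (N + 1 - j)) (N + 1),
          Finset.sum_range_succ' A (N + 1)]
      have hterm : ∀ j ∈ range (N + 1),
          ((N + 1).choose (j + 1) : ℝ) * (-1) ^ (j + 1) * pochR x (j + 1) *
              pochR (y + ((j + 1 : ℕ) : ℝ)) (N + 1 - (j + 1))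
            = A (j + 1) + B j := by
        intro j hj
        have hP : (((N + 1).choose (j + 1) : ℕ) : ℝ)
            = (N.choose j : ℝ) + (N.choose (j+1) : ℝ) := by
          rw [Nat.choose_succ_succ]; push_cast; ring
        simp only [hA, hB]
        rw [hP]
        have hsub : N + 1 - (j + 1) = N - j := by omega
        rw [hsub]
        push_cast
        ring
      rw [Finset.sum_congr rfl hterm, Finset.sum_add_distrib]
      have h0 : ((N + 1).choose 0 : ℝ) * (-1) ^ 0 * pochR x 0 * pochR (y + ((0:ℕ):ℝ)) (N + 1 - 0)
          = A 0 := by simp [hA]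
      rw [h0]
      ring
    have claim2 : ∑ j ∈ range (N + 2), A j = ∑ j ∈ range (N + 1), A j := by
      rw [Finset.sum_range_succ]
      simp [hA]
    rw [claim1, claim2, ← Finset.sum_add_distrib]
    have claim3 : ∀ j ∈ range (N + 1),
        A j + B j = (y - x) * ((N.choose j : ℝ) * (-1) ^ j * pochR x j *
          pochR ((y + 1) + j) (N - j)) := by
      intro j hj
      have hjN : j ≤ N := Nat.lt_succ_iff.1 (mem_range.1 hj)
      have h1 : N + 1 - j = (N - j) + 1 := by omega
      simp only [hA, hB]
      rw [h1, pochR_succ_left, pochR_succ,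
        show (y + (j:ℕ)) + 1 = (y + 1) + (j:ℕ) by push_cast; ring]
      push_cast
      ring
    rw [Finset.sum_congr rfl claim3, ← Finset.mul_sum, ih (y + 1),
      show y + 1 - x = (y - x) + 1 by ring, ← pochR_succ_left]

/-- Telescoping certificate for Pfaff–Saalschütz. -/
noncomputable def psG (a b c : ℝ) (n : ℕ) : ℕ → ℝ
  | 0 => 0
  | (k + 1) => -((n.choose k : ℝ)) * pochR (c - a) (k + 1) * pochR (c - b) (k + 1) *
      pochR (a + b - c) (n - k) * pochR (c + k) (n - k)

/-- Pfaff–Saalschütz in polynomial (division-free) form. -/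
theorem pfaff_saalschutz (a b c : ℝ) : ∀ n : ℕ,
    ∑ k ∈ range (n + 1),
        (n.choose k : ℝ) * pochR (c - a) k * pochR (c - b) k *
          pochR (a + b - c) (n - k) * pochR (c + k) (n - k)
      = pochR a n * pochR b n := by
  intro n
  induction n with
  | zero => simp [pochR_zero]
  | succ n ih =>
    set T : ℕ → ℕ → ℝ := fun N k =>
      (N.choose k : ℝ) * pochR (c - a) k * pochR (c - b) k *
        pochR (a + b - c) (N - k) * pochR (c + k) (N - k) with hT
    have key : ∀ k ∈ range (n + 2),
        T (n + 1) k = (a + n) * (b + n) * T n k +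
          (psG a b c n (k + 1) - psG a b c n k) := by
      intro k hk
      have hk' : k ≤ n + 1 := Nat.lt_succ_iff.1 (mem_range.1 hk)
      by_cases hk0 : k = 0
      · subst hk0
        simp only [hT, psG, Nat.choose_zero_right, Nat.cast_one, Nat.sub_zero,
          Nat.cast_zero, add_zero, Nat.choose_zero_right]
        rw [pochR_succ (a + b - c) n, pochR_succ c n]
        simp only [pochR_zero, pochR_succ, zero_add, Nat.cast_zero, add_zero, one_mul]
        push_cast
        ring
      · obtain ⟨j, rfl⟩ := Nat.exists_eq_succ_of_ne_zero hk0
        by_cases hkn : j + 1 ≤ n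
        · obtain ⟨d, hd⟩ : ∃ d, n = (j + 1) + d := ⟨n - (j+1), by omega⟩
          have e1 : n + 1 - (j + 1) = d + 1 := by omega
          have e2 : n - (j + 1) = d := by omega
          have e3 : n - j = d + 1 := by omega
          have hrel : ((n.choose (j+1) : ℕ) : ℝ) * (j + 1)
              = ((n.choose j : ℕ) : ℝ) * (d + 1) := by
            have := Nat.choose_succ_right_eq n j
            have h4 : n - j = d + 1 := by omega
            rw [h4] at this
            exact_mod_cast congrArg (fun z : ℕ => (z : ℝ)) this
          have hP : (((n + 1).choose (j + 1) : ℕ) : ℝ)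
              = (n.choose j : ℝ) + (n.choose (j+1) : ℝ) := by
            rw [Nat.choose_succ_succ]; push_cast; ring
          simp only [hT, psG, e1, e2, e3]
          rw [hP]
          push_cast
          rw [pochR_succ (a + b - c) d, pochR_succ (c + ((j:ℝ)+1)) d,
            pochR_succ_left (c + (j:ℝ)) d,
            pochR_succ (c - a) (j + 1), pochR_succ (c - b) (j + 1)]
          rw [show c + (j:ℝ) + 1 = c + ((j:ℝ)+1) by ring]
          have hn' : (n : ℝ) = (j : ℝ) + 1 + d := by rw [hd]; push_cast; ring
          rw [hn']
          push_cast at hrel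
          simp only [Nat.succ_eq_add_one, Nat.cast_add, Nat.cast_one, Nat.cast_ofNat]
          linear_combination (- pochR (c - a) (j+1) * pochR (c - b) (j+1) *
            pochR (a + b - c) d * pochR (c + ((j:ℝ)+1)) d * (a + b - c + (d:ℝ))) * hrel
        · have e0 : n = j := by omega
          subst e0
          simp only [hT, psG]
          have c1 : (n + 1) - (n + 1) = 0 := by omega
          have c2 : n - (n + 1) = 0 := by omega
          have c3 : n - n = 0 := by omega
          rw [c1, c2, c3]
          simp [pochR_zero, Nat.choose_succ_self]
    have sum1 : ∑ k ∈ range (n + 2), T (n + 1) k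
        = (a + n) * (b + n) * ∑ k ∈ range (n + 2), T n k
          + (psG a b c n (n + 2) - psG a b c n 0) := by
      rw [Finset.sum_congr rfl key, Finset.sum_add_distrib, Finset.mul_sum,
        Finset.sum_range_sub (psG a b c n)]
    have h5 : ∑ k ∈ range (n + 2), T n k = ∑ k ∈ range (n + 1), T n k := by
      rw [Finset.sum_range_succ]
      simp [hT, Nat.choose_succ_self]
    have h6 : psG a b c n (n + 2) = 0 := by
      simp [psG, Nat.choose_succ_self]
    have h7 : psG a b c n 0 = 0 := rfl
    calc ∑ k ∈ range (n + 2), T (n + 1) k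
        = (a + n) * (b + n) * ∑ k ∈ range (n + 1), T n k := by
          rw [sum1, h5, h6, h7]; ring
      _ = pochR a (n + 1) * pochR b (n + 1) := by
          rw [ih, pochR_succ a n, pochR_succ b n]; ring


lemma F11_summable_norm (a b x : ℝ) (hb : 1 ≤ b) :
    Summable fun j : ℕ => ‖pochR a j * x ^ j / (pochR b j * j.factorial)‖ := by
  have hbpos : (0:ℝ) < b := lt_of_lt_of_le one_pos hb
  set t : ℕ → ℝ := fun j => pochR a j * x ^ j / (pochR b j * j.factorial) with ht
  apply summable_of_ratio_norm_eventually_le (r := 1/2) (by norm_num)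
  have hN : ∃ N : ℕ, ∀ j : ℕ, N ≤ j → |a + j| * |x| ≤ 1/2 * ((b + j) * (j + 1)) := by
    refine ⟨⌈2 * |x| * (|a| + 1)⌉₊ + 1, fun j hj => ?_⟩
    have h1 : 2 * |x| * (|a| + 1) ≤ j := by
      calc 2 * |x| * (|a| + 1) ≤ (⌈2 * |x| * (|a| + 1)⌉₊ : ℝ) := Nat.le_ceil _
        _ ≤ j := by exact_mod_cast Nat.le_of_succ_le hj
    have h2 : |a + (j:ℝ)| ≤ |a| + j := by
      have := abs_add_le a (j:ℝ)
      rwa [Nat.abs_cast] at this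
    have hx : (0:ℝ) ≤ |x| := abs_nonneg x
    have ha : (0:ℝ) ≤ |a| := abs_nonneg a
    have hj0 : (0:ℝ) ≤ j := Nat.cast_nonneg j
    have e1 : |a| * |x| + |x| ≤ (j:ℝ)/2 := by nlinarith
    have exj : |x| ≤ (j:ℝ)/2 := by nlinarith [mul_nonneg ha hx]
    have e2 : (j:ℝ) * |x| ≤ j * (j/2) := mul_le_mul_of_nonneg_left exj hj0
    have e3 : (0:ℝ) ≤ b * ((j:ℝ) + 1) := by positivity
    calc |a + (j:ℝ)| * |x| ≤ (|a| + j) * |x| := mul_le_mul_of_nonneg_right h2 hx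
      _ ≤ 1/2 * ((b + j) * (j + 1)) := by nlinarith
  obtain ⟨N, hNs⟩ := hN
  filter_upwards [Filter.eventually_ge_atTop N] with j hj
  show ‖‖t (j+1)‖‖ ≤ 1/2 * ‖‖t j‖‖
  rw [norm_norm, norm_norm]
  have hfac : ((j.factorial : ℝ)) ≠ 0 := by exact_mod_cast j.factorial_ne_zero
  have hpb : (0:ℝ) < pochR b j := pochR_pos hbpos j
  have hbj : (0:ℝ) < b + j := by positivity
  have hstep : t (j+1) = t j * ((a + j) * x / ((b + j) * (j + 1))) := by
    simp only [ht]
    rw [pochR_succ a j, pochR_succ b j, Nat.factorial_succ, pow_succ]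
    push_cast
    field_simp
  rw [hstep]
  rw [norm_mul]
  have hrho : ‖(a + j) * x / ((b + j) * (j + 1))‖ ≤ 1/2 := by
    rw [norm_div, norm_mul, norm_mul]
    simp only [Real.norm_eq_abs]
    rw [abs_of_nonneg (le_of_lt hbj), abs_of_nonneg (by positivity : (0:ℝ) ≤ (j:ℝ) + 1)]
    rw [div_le_iff₀ (by positivity)]
    calc |a + j| * |x| ≤ 1/2 * ((b + j) * (j + 1)) := hNs j hj
      _ = 1/2 * ((b + ↑j) * (↑j + 1)) := by ring
  calc ‖t j‖ * ‖(a + j) * x / ((b + j) * (j + 1))‖ ≤ ‖t j‖ * (1/2) :=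
        mul_le_mul_of_nonneg_left hrho (norm_nonneg _)
    _ = 1/2 * ‖t j‖ := by ring

lemma exp_summable_norm (x : ℝ) :
    Summable fun l : ℕ => ‖(-x) ^ l / l.factorial‖ := by
  have := Real.summable_pow_div_factorial |x|
  apply Summable.congr this
  intro l
  rw [norm_div, norm_pow]
  simp [abs_abs, Nat.abs_cast]

lemma exp_eq_tsum' (x : ℝ) : Real.exp (-x) = ∑' l : ℕ, (-x) ^ l / l.factorial := by
  rw [Real.exp_eq_exp_ℝ, NormedSpace.exp_eq_tsum_div]

/-- Cauchy-product coefficient identity via Chu–Vandermonde. -/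
lemma cauchy_coeff (a b x : ℝ) (hb : 1 ≤ b) (s : ℕ) :
    ∑ k ∈ range (s + 1),
        (pochR a k * x ^ k / (pochR b k * k.factorial)) * ((-x) ^ (s - k) / (s - k).factorial)
      = pochR (b - a) s * (-x) ^ s / (pochR b s * s.factorial) := by
  have hbpos : (0:ℝ) < b := lt_of_lt_of_le one_pos hb
  have key : ∀ k ∈ range (s + 1),
      (pochR a k * x ^ k / (pochR b k * k.factorial)) * ((-x) ^ (s - k) / (s - k).factorial)
        = ((s.choose k : ℝ) * (-1) ^ k * pochR a k * pochR (b + k) (s - k)) *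
            ((-1) ^ s * x ^ s / (pochR b s * s.factorial)) := by
    intro k hk
    have hks : k ≤ s := Nat.lt_succ_iff.1 (mem_range.1 hk)
    obtain ⟨d, hd⟩ : ∃ d, s = k + d := ⟨s - k, by omega⟩
    subst hd
    have e1 : k + d - k = d := by omega
    rw [e1]
    have hsplit : pochR b (k + d) = pochR b k * pochR (b + k) d := pochR_add b k d
    have hfact : ((k + d).factorial : ℝ) = ((k+d).choose k : ℝ) * k.factorial * d.factorial := by
      rw [← Nat.choose_mul_factorial_mul_factorial (show k ≤ k + d by omega)]
      push_cast
      rw [e1]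
    have h1 : pochR b k ≠ 0 := ne_of_gt (pochR_pos hbpos k)
    have h2 : pochR (b + k) d ≠ 0 := ne_of_gt (pochR_pos (by positivity) d)
    have h3 : ((k.factorial : ℕ) : ℝ) ≠ 0 := by exact_mod_cast k.factorial_ne_zero
    have h4 : ((d.factorial : ℕ) : ℝ) ≠ 0 := by exact_mod_cast d.factorial_ne_zero
    have h5 : (((k+d).choose k : ℕ) : ℝ) ≠ 0 :=
      Nat.cast_ne_zero.2 (Nat.choose_pos (show k ≤ k + d by omega)).ne'
    rw [hsplit, hfact, neg_pow x d, pow_add x k d, pow_add (-1:ℝ) k d]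
    have hsq : ((-1:ℝ)) ^ k * (-1:ℝ) ^ k = 1 := by
      rw [← pow_add, ← two_mul]
      exact Even.neg_one_pow (even_two_mul k)
    field_simp
    linear_combination (- pochR a k * x ^ k * x ^ d) * hsq
  rw [Finset.sum_congr rfl key, ← Finset.sum_mul, vdm2 a s b, neg_pow x s]
  ring

/-- Kummer's transformation (tsum form). -/
lemma kummer_tsum (a b x : ℝ) (hb : 1 ≤ b) :
    Real.exp (-x) * F11 a b x
      = ∑' s : ℕ, pochR (b - a) s * (-x) ^ s / (pochR b s * s.factorial) := by
  rw [exp_eq_tsum', F11, mul_comm,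
    tsum_mul_tsum_eq_tsum_sum_range_of_summable_norm
      (F11_summable_norm a b x hb) (exp_summable_norm x)]
  congr 1
  funext s
  exact cauchy_coeff a b x hb s

/-- Kummer with nonpositive-integer difference: finite polynomial form. -/
lemma kummer_finite (a b x : ℝ) (hb : 1 ≤ b) (N : ℕ) (hba : b - a = -(N : ℝ)) :
    Real.exp (-x) * F11 a b x
      = ∑ s ∈ range (N + 1), pochR (-(N : ℝ)) s * (-x) ^ s / (pochR b s * s.factorial) := by
  rw [kummer_tsum a b x hb, hba]
  apply tsum_eq_sum
  intro s hs
  have hNs : N < s := by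
    by_contra h
    exact hs (mem_range.2 (by omega))
  rw [pochR_neg_nat_eq_zero N s hNs]
  simp

lemma coeff_identity (m α β i n p : ℕ) (hm : 1 ≤ m) (hi1 : 1 ≤ i) (hi2 : i ≤ α + 1)
    (hn : n = m + α) (hp : p = m + β) (t : ℕ) (ht : t < n) :
    ((Nat.factorial (p + α) : ℕ) : ℝ) *
      ∑ k ∈ range n,
        pochR (-(m : ℝ) - i + 2) k * pochR ((p : ℝ) + i - 1) k /
            ((k.factorial : ℝ) * ((β + k + 1).factorial : ℝ)) *
          (pochR (-(((n - 1 - k : ℕ)) : ℝ)) (n - 1 - t) * (-1 : ℝ) ^ (n - 1 - t) /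
            (pochR ((β : ℝ) + k + 2) (n - 1 - t) * ((n - 1 - t).factorial : ℝ)))
      = pochR (-(α : ℝ) + i - 1) t * pochR (-(n : ℝ) - p - i + 2) t / (t.factorial : ℝ) := by
  have hn2 : 1 ≤ n := by omega
  set s := n - 1 - t with hs
  have hts : t = n - 1 - s := by omega
  have hst : s + t = n - 1 := by omega
  have hnr : (n : ℝ) = (m : ℝ) + α := by rw [hn]; push_cast; ring
  have hpr : (p : ℝ) = (m : ℝ) + β := by rw [hp]; push_cast; ring
  -- the Pfaff–Saalschütz instance
  have PS := pfaff_saalschutz ((i : ℝ) - 1 - α) (2 - (n : ℝ) - p - i) (1 - (n : ℝ)) t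
  -- bridging claim
  have key : ∀ k ∈ range n,
      ((Nat.factorial (p + α) : ℕ) : ℝ) * (t.factorial : ℝ) *
        (pochR (-(m : ℝ) - i + 2) k * pochR ((p : ℝ) + i - 1) k /
            ((k.factorial : ℝ) * ((β + k + 1).factorial : ℝ)) *
          (pochR (-(((n - 1 - k : ℕ)) : ℝ)) s * (-1 : ℝ) ^ s /
            (pochR ((β : ℝ) + k + 2) s * ((s.factorial : ℕ) : ℝ))))
      = (t.choose k : ℝ) * pochR ((1 - (n : ℝ)) - ((i : ℝ) - 1 - α)) k *
          pochR ((1 - (n : ℝ)) - (2 - (n : ℝ) - p - i)) k *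
          pochR (((i : ℝ) - 1 - α) + (2 - (n : ℝ) - p - i) - (1 - (n : ℝ))) (t - k) *
          pochR ((1 - (n : ℝ)) + k) (t - k) := by
    intro k hk
    have hkn : k < n := mem_range.1 hk
    have harg_a : (1 - (n : ℝ)) - ((i : ℝ) - 1 - α) = -(m : ℝ) - i + 2 := by
      rw [hnr]; ring
    have harg_b : (1 - (n : ℝ)) - (2 - (n : ℝ) - p - i) = (p : ℝ) + i - 1 := by ring
    have harg_c : ((i : ℝ) - 1 - α) + (2 - (n : ℝ) - p - i) - (1 - (n : ℝ))
        = -(((p + α : ℕ)) : ℝ) := by push_cast; ring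
    have harg_d : (1 - (n : ℝ)) + (k : ℝ) = -(((n - 1 - k : ℕ)) : ℝ) := by
      have : ((n - 1 - k : ℕ) : ℝ) = (n : ℝ) - 1 - k := by
        have h1 : n - 1 - k = n - (1 + k) := by omega
        rw [h1, Nat.cast_sub (by omega)]
        push_cast; ring
      rw [this]; ring
    rw [harg_a, harg_b, harg_c, harg_d]
    by_cases hkt : k ≤ t
    · -- main case
      have hσ2 : ((-1 : ℝ) ^ (t - k)) * (-1 : ℝ) ^ (t - k) = 1 := by
        rw [← pow_add]; exact Even.neg_one_pow ⟨t - k, by omega⟩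
      have hτ2 : ((-1 : ℝ) ^ s) * (-1 : ℝ) ^ s = 1 := by
        rw [← pow_add]; exact Even.neg_one_pow ⟨s, by omega⟩
      have e1 := pochR_neg_nat (p + α) (t - k) (by omega)
      have e2 := pochR_neg_nat (n - 1 - k) (t - k) (by omega)
      have e3 := pochR_neg_nat (n - 1 - k) s (by omega)
      have e4 := pochR_nat_factorial (β + k + 1) s
      have e5 : ((t.choose k : ℕ) : ℝ) * (k.factorial : ℝ) * ((t - k).factorial : ℝ)
          = (t.factorial : ℝ) := by
        exact_mod_cast congrArg (fun z : ℕ => (z : ℝ))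
          (Nat.choose_mul_factorial_mul_factorial hkt)
      have i1 : (p + α) - (t - k) = β + k + 1 + s := by omega
      have i2 : (n - 1 - k) - (t - k) = s := by omega
      have i3 : (n - 1 - k) - s = t - k := by omega
      rw [i1] at e1
      rw [i2] at e2
      rw [i3] at e3
      have e4' : pochR ((β : ℝ) + k + 2) s * (((β + k + 1).factorial : ℕ) : ℝ)
          = (((β + k + 1 + s).factorial : ℕ) : ℝ) := by
        have : ((β + k + 1 : ℕ) : ℝ) + 1 = (β : ℝ) + k + 2 := by push_cast; ring
        rw [← this]; exact e4
      have hF1 : (((t - k).factorial : ℕ) : ℝ) ≠ 0 := by exact_mod_cast Nat.factorial_ne_zero _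
      have hF2 : ((k.factorial : ℕ) : ℝ) ≠ 0 := by exact_mod_cast Nat.factorial_ne_zero _
      have hF3 : ((s.factorial : ℕ) : ℝ) ≠ 0 := by exact_mod_cast Nat.factorial_ne_zero _
      have hF6 : (((β + k + 1).factorial : ℕ) : ℝ) ≠ 0 := by
        exact_mod_cast Nat.factorial_ne_zero _
      have hF7 : (((β + k + 1 + s).factorial : ℕ) : ℝ) ≠ 0 := by
        exact_mod_cast Nat.factorial_ne_zero _
      have hX4 : pochR ((β : ℝ) + k + 2) s ≠ 0 := by
        have : (0:ℝ) < (β : ℝ) + k + 2 := by positivity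
        exact ne_of_gt (pochR_pos this s)
      have harg_e : (-(((p + α) : ℕ)) : ℝ) = -(α:ℝ) - p := by push_cast; ring
      rw [harg_e] at e1
      apply mul_right_cancel₀ hF1
      field_simp
      rw [harg_e]
      refine (mul_left_inj' hF1).1 ?_
      linear_combination
        ((Nat.factorial (p+α) : ℝ) * (t.factorial : ℝ) * pochR (-(m : ℝ) - i + 2) k *
          pochR ((p : ℝ) + i - 1) k * (-1:ℝ)^s) * e3 +
        ((Nat.factorial (p+α) : ℝ) * (t.factorial : ℝ) * pochR (-(m : ℝ) - i + 2) k *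
          pochR ((p : ℝ) + i - 1) k * ((n-1-k).factorial : ℝ)) * hτ2 +
        (- (pochR (-(m : ℝ) - i + 2) k * pochR ((p : ℝ) + i - 1) k) *
          pochR (-(α:ℝ) - p) (t-k) * pochR (-(((n-1-k):ℕ)) : ℝ) (t-k) *
          pochR ((β : ℝ) + k + 2) s * (((β+k+1).factorial : ℕ) : ℝ) * ((s.factorial : ℕ) : ℝ)) * e5 +
        (- (pochR (-(m : ℝ) - i + 2) k * pochR ((p : ℝ) + i - 1) k) * (t.factorial : ℝ) *
          pochR (-(α:ℝ) - p) (t-k) * pochR (-(((n-1-k):ℕ)) : ℝ) (t-k) * ((s.factorial : ℕ) : ℝ)) * e4' +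
        (- (pochR (-(m : ℝ) - i + 2) k * pochR ((p : ℝ) + i - 1) k) * (t.factorial : ℝ) *
          pochR (-(((n-1-k):ℕ)) : ℝ) (t-k) * ((s.factorial : ℕ) : ℝ)) * e1 +
        (- (pochR (-(m : ℝ) - i + 2) k * pochR ((p : ℝ) + i - 1) k) * (t.factorial : ℝ) *
          ((-1:ℝ) ^ (t-k)) * ((Nat.factorial (p+α) : ℕ) : ℝ)) * e2 +
        (- (pochR (-(m : ℝ) - i + 2) k * pochR ((p : ℝ) + i - 1) k) * (t.factorial : ℝ) *
          ((Nat.factorial (p+α) : ℕ) : ℝ) * (((n-1-k).factorial : ℕ) : ℝ)) * hσ2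
    · -- vanishing case : t < k
      have h1 : t.choose k = 0 := Nat.choose_eq_zero_of_lt (by omega)
      have h2 : pochR (-(((n - 1 - k : ℕ)) : ℝ)) s = 0 :=
        pochR_neg_nat_eq_zero (n - 1 - k) s (by omega)
      rw [h1, h2]
      simp
  have hsum : ((Nat.factorial (p + α) : ℕ) : ℝ) * (t.factorial : ℝ) *
      ∑ k ∈ range n,
        pochR (-(m : ℝ) - i + 2) k * pochR ((p : ℝ) + i - 1) k /
            ((k.factorial : ℝ) * ((β + k + 1).factorial : ℝ)) *
          (pochR (-(((n - 1 - k : ℕ)) : ℝ)) s * (-1 : ℝ) ^ s /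
            (pochR ((β : ℝ) + k + 2) s * ((s.factorial : ℕ) : ℝ)))
      = pochR ((i : ℝ) - 1 - α) t * pochR (2 - (n : ℝ) - p - i) t := by
    rw [Finset.mul_sum, Finset.sum_congr rfl key, ← PS]
    symm
    apply Finset.sum_subset (Finset.range_subset_range.2 (by omega))
    intro k hk hk'
    have hlt : t < k := by
      simp only [mem_range] at hk hk'
      omega
    rw [Nat.choose_eq_zero_of_lt hlt]
    simp
  have hFt : ((t.factorial : ℕ) : ℝ) ≠ 0 := by exact_mod_cast Nat.factorial_ne_zero t
  have harg1 : pochR (-(α : ℝ) + i - 1) t = pochR ((i : ℝ) - 1 - α) t := by congr 1; ring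
  have harg2 : pochR (-(n : ℝ) - p - i + 2) t = pochR (2 - (n : ℝ) - p - i) t := by
    congr 1; ring
  rw [harg1, harg2, eq_div_iff hFt]
  linear_combination hsum

/-- The resummation identity (Appendix A): the finite sum
`∑_{k=0}^{α+1-i} (-α+i-1)_k (-n-p-i+2)_k w^{n-k-1}/k!` equals
`e^{-w} (β!)⁻¹ (p+α)! 𝒜`, where
`𝒜 = β! ∑_{k=0}^{m+i-2} (-m-i+2)_k (p+i-1)_k / (k!(β+k+1)!) ₁F₁(p+α+1;β+k+2;w)`,
with `m = n - α`, `β = p - m`. -/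
theorem resummation_identity (m α β i : ℕ) (hm : 1 ≤ m) (hi1 : 1 ≤ i) (hi2 : i ≤ α + 1)
    (n p : ℕ) (hn : n = m + α) (hp : p = m + β)
    (hcond1 : (m : ℤ) + i - 2 ≤ (n : ℤ) - 1) (hcond2 : (α : ℤ) - i + 1 < (n : ℤ) - 1)
    (w : ℝ) :
    ∑ k ∈ Finset.range (α + 2 - i),
        pochR (-(α : ℝ) + i - 1) k * pochR (-(n : ℝ) - p - i + 2) k *
          w ^ (n - 1 - k) / k.factorial =
      Real.exp (-w) * ((Nat.factorial β : ℝ))⁻¹ * (Nat.factorial (p + α) : ℝ) *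
        ((Nat.factorial β : ℝ) *
          ∑ k ∈ Finset.range (m + i - 1),
            pochR (-(m : ℝ) - i + 2) k * pochR ((p : ℝ) + i - 1) k /
              (k.factorial * Nat.factorial (β + k + 1)) *
              F11 ((p : ℝ) + α + 1) ((β : ℝ) + k + 2) w) := by
  have hn1 : 1 ≤ n := by omega
  have hmi3 : 3 ≤ m + i := by omega
  have hmi1 : m + i - 1 ≤ n := by omega
  have hain : α + 2 - i ≤ n := by omega
  have hβ : ((β.factorial : ℕ) : ℝ) ≠ 0 := by exact_mod_cast Nat.factorial_ne_zero β
  have hnr : (n : ℝ) = (m : ℝ) + α := by rw [hn]; push_cast; ring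
  have hpr : (p : ℝ) = (m : ℝ) + β := by rw [hp]; push_cast; ring
  -- LHS transformation
  have hLHS : ∑ k ∈ Finset.range (α + 2 - i),
        pochR (-(α : ℝ) + i - 1) k * pochR (-(n : ℝ) - p - i + 2) k *
          w ^ (n - 1 - k) / k.factorial
      = ∑ s ∈ range n,
          pochR (-(α : ℝ) + i - 1) (n - 1 - s) * pochR (-(n : ℝ) - p - i + 2) (n - 1 - s) /
              ((n - 1 - s).factorial : ℝ) * w ^ s := by
    have pad : ∑ k ∈ Finset.range (α + 2 - i),
          pochR (-(α : ℝ) + i - 1) k * pochR (-(n : ℝ) - p - i + 2) k *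
            w ^ (n - 1 - k) / k.factorial
        = ∑ k ∈ Finset.range n,
            pochR (-(α : ℝ) + i - 1) k * pochR (-(n : ℝ) - p - i + 2) k *
              w ^ (n - 1 - k) / k.factorial := by
      apply Finset.sum_subset (Finset.range_subset_range.2 hain)
      intro t ht ht'
      have h1 : α + 1 - i < t := by
        simp only [mem_range] at ht ht'
        omega
      have harg : -(α : ℝ) + i - 1 = -(((α + 1 - i : ℕ)) : ℝ) := by
        rw [Nat.cast_sub (by omega)]
        push_cast
        ring
      rw [harg, pochR_neg_nat_eq_zero _ _ h1]
      simp
    rw [pad, ← Finset.sum_range_reflect]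
    apply Finset.sum_congr rfl
    intro s hs
    have hsn : s < n := mem_range.1 hs
    have he : n - 1 - (n - 1 - s) = s := by omega
    rw [he]
    ring
  -- RHS transformation
  have kum : ∀ k ∈ range (m + i - 1),
      Real.exp (-w) * F11 ((p : ℝ) + α + 1) ((β : ℝ) + k + 2) w
        = ∑ s ∈ range n,
            pochR (-(((n - 1 - k : ℕ)) : ℝ)) s * (-w) ^ s /
              (pochR ((β : ℝ) + k + 2) s * (s.factorial : ℝ)) := by
    intro k hk
    have hkn : k ≤ n - 1 := by
      have := mem_range.1 hk
      omega
    have hb1 : (1 : ℝ) ≤ (β : ℝ) + k + 2 := by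
      have h1 : (0:ℝ) ≤ (β : ℝ) := Nat.cast_nonneg β
      have h2 : (0:ℝ) ≤ (k : ℝ) := Nat.cast_nonneg k
      linarith
    have hcast : ((n - 1 - k : ℕ) : ℝ) = (n : ℝ) - 1 - k := by
      rw [show n - 1 - k = n - (1 + k) by omega, Nat.cast_sub (by omega)]
      push_cast
      ring
    have hba : ((β : ℝ) + k + 2) - ((p : ℝ) + α + 1) = -(((n - 1 - k : ℕ)) : ℝ) := by
      rw [hcast, hnr, hpr]
      ring
    rw [kummer_finite ((p : ℝ) + α + 1) ((β : ℝ) + k + 2) w hb1 (n - 1 - k) hba]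
    rw [show (-(((n - 1 - k : ℕ)) : ℝ)) = ((β : ℝ) + k + 2) - ((p : ℝ) + α + 1) from hba.symm]
    rw [show ((β : ℝ) + k + 2) - ((p : ℝ) + α + 1) = -(((n - 1 - k : ℕ)) : ℝ) from hba]
    apply Finset.sum_subset (Finset.range_subset_range.2 (by omega))
    intro s hs hs'
    have hgt : n - 1 - k < s := by
      simp only [mem_range] at hs hs'
      omega
    rw [pochR_neg_nat_eq_zero _ _ hgt]
    simp
  have hRHS : Real.exp (-w) * ((Nat.factorial β : ℝ))⁻¹ * (Nat.factorial (p + α) : ℝ) *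
        ((Nat.factorial β : ℝ) *
          ∑ k ∈ Finset.range (m + i - 1),
            pochR (-(m : ℝ) - i + 2) k * pochR ((p : ℝ) + i - 1) k /
              (k.factorial * Nat.factorial (β + k + 1)) *
              F11 ((p : ℝ) + α + 1) ((β : ℝ) + k + 2) w)
      = ∑ s ∈ range n,
          ((Nat.factorial (p + α) : ℕ) : ℝ) *
            (∑ k ∈ range n,
              pochR (-(m : ℝ) - i + 2) k * pochR ((p : ℝ) + i - 1) k /
                  ((k.factorial : ℝ) * ((β + k + 1).factorial : ℝ)) *
                (pochR (-(((n - 1 - k : ℕ)) : ℝ)) s * (-1 : ℝ) ^ s /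
                  (pochR ((β : ℝ) + k + 2) s * ((s.factorial : ℕ) : ℝ)))) * w ^ s := by
    have e0 : ∀ S : ℝ, Real.exp (-w) * ((Nat.factorial β : ℝ))⁻¹ * (Nat.factorial (p + α) : ℝ) *
        ((Nat.factorial β : ℝ) * S)
        = ((Nat.factorial (p + α) : ℕ) : ℝ) * (Real.exp (-w) * S) := by
      intro S
      field_simp
    rw [e0, Finset.mul_sum]
    have e1 : ∀ k ∈ range (m + i - 1),
        Real.exp (-w) * (pochR (-(m : ℝ) - i + 2) k * pochR ((p : ℝ) + i - 1) k /
            (k.factorial * Nat.factorial (β + k + 1)) *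
            F11 ((p : ℝ) + α + 1) ((β : ℝ) + k + 2) w)
        = pochR (-(m : ℝ) - i + 2) k * pochR ((p : ℝ) + i - 1) k /
            ((k.factorial : ℝ) * ((β + k + 1).factorial : ℝ)) *
            ∑ s ∈ range n,
              pochR (-(((n - 1 - k : ℕ)) : ℝ)) s * (-w) ^ s /
                (pochR ((β : ℝ) + k + 2) s * (s.factorial : ℝ)) := by
      intro k hk
      rw [← kum k hk]
      push_cast
      ring
    rw [Finset.sum_congr rfl e1]
    -- pad outer sum to range n
    have pad : ∑ k ∈ range (m + i - 1),
          pochR (-(m : ℝ) - i + 2) k * pochR ((p : ℝ) + i - 1) k /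
              ((k.factorial : ℝ) * ((β + k + 1).factorial : ℝ)) *
            ∑ s ∈ range n,
              pochR (-(((n - 1 - k : ℕ)) : ℝ)) s * (-w) ^ s /
                (pochR ((β : ℝ) + k + 2) s * (s.factorial : ℝ))
        = ∑ k ∈ range n,
            pochR (-(m : ℝ) - i + 2) k * pochR ((p : ℝ) + i - 1) k /
                ((k.factorial : ℝ) * ((β + k + 1).factorial : ℝ)) *
              ∑ s ∈ range n,
                pochR (-(((n - 1 - k : ℕ)) : ℝ)) s * (-w) ^ s /
                  (pochR ((β : ℝ) + k + 2) s * (s.factorial : ℝ)) := by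
      apply Finset.sum_subset (Finset.range_subset_range.2 hmi1)
      intro k hk hk'
      have h1 : m + i - 2 < k := by
        simp only [mem_range] at hk hk'
        omega
      have harg : -(m : ℝ) - i + 2 = -(((m + i - 2 : ℕ)) : ℝ) := by
        rw [Nat.cast_sub (by omega)]
        push_cast
        ring
      rw [harg, pochR_neg_nat_eq_zero _ _ h1]
      simp
    rw [pad]
    -- distribute, swap, and extract w^s
    have e2 : ∀ k ∈ range n,
        pochR (-(m : ℝ) - i + 2) k * pochR ((p : ℝ) + i - 1) k /
            ((k.factorial : ℝ) * ((β + k + 1).factorial : ℝ)) *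
          ∑ s ∈ range n,
            pochR (-(((n - 1 - k : ℕ)) : ℝ)) s * (-w) ^ s /
              (pochR ((β : ℝ) + k + 2) s * (s.factorial : ℝ))
        = ∑ s ∈ range n,
            pochR (-(m : ℝ) - i + 2) k * pochR ((p : ℝ) + i - 1) k /
                ((k.factorial : ℝ) * ((β + k + 1).factorial : ℝ)) *
              (pochR (-(((n - 1 - k : ℕ)) : ℝ)) s * (-1 : ℝ) ^ s /
                (pochR ((β : ℝ) + k + 2) s * ((s.factorial : ℕ) : ℝ))) * w ^ s := by
      intro k _
      rw [Finset.mul_sum]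
      apply Finset.sum_congr rfl
      intro s _
      rw [neg_pow w s]
      ring
    rw [Finset.sum_congr rfl e2, Finset.sum_comm, Finset.mul_sum]
    apply Finset.sum_congr rfl
    intro s _
    rw [← Finset.sum_mul]
    ring
  rw [hLHS, hRHS]
  apply Finset.sum_congr rfl
  intro s hs
  have hsn : s < n := mem_range.1 hs
  have ht : n - 1 - s < n := by omega
  have hkey := coeff_identity m α β i n p hm hi1 hi2 hn hp (n - 1 - s) ht
  have hss : n - 1 - (n - 1 - s) = s := by omega
  rw [hss] at hkey
  rw [← hkey]
end

section
/- Let γ > γ_p where γ_p = (c₂ + r)/(1 - c₂) with r = √(c₁ + c₂ - c₁c₂), c₁ ∈ (0,1), c₂ ∈ (0,1). Then ξ = (γ + c₁)(1 + γ)/(γ - (1+γ)c₂) satisfies ξ > μ where μ = ((1+r)/(1-c₂))². -/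
/-- Above the phase transition threshold `γ_p = (c₂ + r)/(1 - c₂)`, with
`r = √(c₁ + c₂ - c₁c₂)`, the limit `ξ = (γ+c₁)(1+γ)/(γ-(1+γ)c₂)` of the largest eigenvalue
strictly exceeds the right edge of the bulk `μ = ((1+r)/(1-c₂))²`. -/
theorem xi_gt_mu (c₁ c₂ γ : ℝ) (hc₁0 : 0 < c₁) (hc₁1 : c₁ < 1)
    (hc₂0 : 0 < c₂) (hc₂1 : c₂ < 1)
    (hγ : γ > (c₂ + Real.sqrt (c₁ + c₂ - c₁ * c₂)) / (1 - c₂)) :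
    ((1 + Real.sqrt (c₁ + c₂ - c₁ * c₂)) / (1 - c₂)) ^ 2 <
      (γ + c₁) * (1 + γ) / (γ - (1 + γ) * c₂) := by
  have hs : (0:ℝ) < c₁ + c₂ - c₁ * c₂ := by nlinarith
  set r := Real.sqrt (c₁ + c₂ - c₁ * c₂) with hr
  have hr0 : 0 ≤ r := Real.sqrt_nonneg _
  have hr2 : r ^ 2 = c₁ + c₂ - c₁ * c₂ := Real.sq_sqrt hs.le
  have h1 : (0:ℝ) < 1 - c₂ := by linarith
  have hγ' : (c₂ + r) / (1 - c₂) < γ := hγ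
  have hd : r < γ - (1 + γ) * c₂ := by
    have := (div_lt_iff₀ h1).mp hγ'
    nlinarith
  have hd0 : 0 < γ - (1 + γ) * c₂ := lt_of_le_of_lt hr0 hd
  rw [div_pow, div_lt_div_iff₀ (by positivity) hd0]
  nlinarith [mul_pos (sub_pos.2 hd) (sub_pos.2 hd), hr2]
end
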